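/- A normalized n-partite amplitude tensor a is separable if and only if for every party k the k-th flattening M_k has rank equal to 1. -/

import Mathlib

open Matrix

noncomputable section

/-- Insert `j` at position `k` into the partial index tuple `I`, producing a full index tuple. -/
def insertAt {n : ℕ} {d : Fin n → ℕ} (k : Fin n)
    (I : ∀ s : {s : Fin n // s ≠ k}, Fin (d s)) (j : Fin (d k)) :
    ∀ t : Fin n, Fin (d t) :=
  fun t => if h : t = k then Fin.cast (congrArg d h).symm j else I ⟨t, h⟩

/-- The `k`-th flattening of an `n`-partite amplitude tensor `a`. -/
def flatten {n : ℕ} {d : Fin n → ℕ} (a : (∀ t : Fin n, Fin (d t)) → ℂ) (k : Fin n) :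
    Matrix (∀ s : {s : Fin n // s ≠ k}, Fin (d s)) (Fin (d k)) ℂ :=
  fun I j => a (insertAt k I j)

/-- An `n`-partite amplitude tensor is separable if it is a product of local vectors. -/
def Separable {n : ℕ} {d : Fin n → ℕ} (a : (∀ t : Fin n, Fin (d t)) → ℂ) : Prop :=
  ∃ f : ∀ k : Fin n, Fin (d k) → ℂ, ∀ i, a i = ∏ k : Fin n, f k (i k)

/-- An `n`-partite amplitude tensor is normalized if the squared amplitudes sum to 1. -/
def Normalized {n : ℕ} {d : Fin n → ℕ} (a : (∀ t : Fin n, Fin (d t)) → ℂ) : Prop :=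
  ∑ i : ∀ t : Fin n, Fin (d t), ‖a i‖ ^ 2 = 1

/-!
A product tensor has every flattening of the form `vecMulVec g f`, which is nonzero because `a` is,
hence of rank one. Conversely, a flattening of rank at most one has vanishing `2 × 2` minors, which
says that exchanging the `k`-th coordinates of two index tuples `u`, `v` preserves `a u * a v`.
Fixing `i₀` with `a i₀ ≠ 0` and moving the coordinates of `i` into `i₀` one at a time yields
`a i * a i₀ ^ n = a i₀ * ∏ k, a (update i₀ k (i k))`, a product formula for `a`.
-/

open Function Finset

namespace Matrix

variable {m n K : Type*} [Fintype n] [CommRing K] [IsDomain K]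

theorem one_le_rank_of_apply_ne_zero {M : Matrix m n K} {i : m} {j : n} (h : M i j ≠ 0) :
    1 ≤ M.rank := by
  have hdet : (M.submatrix (fun _ : Unit => i) (fun _ : Unit => j)).det ≠ 0 := by simpa using h
  simpa [rank_of_det_ne_zero hdet] using
    rank_submatrix_le M (fun _ : Unit => i) (fun _ : Unit => j)

theorem mul_eq_mul_of_rank_le_one {M : Matrix m n K} (hM : M.rank ≤ 1) (i i' : m) (j j' : n) :
    M i j * M i' j' = M i j' * M i' j := by
  by_contra hne
  have hdet : (M.submatrix ![i, i'] ![j, j']).det ≠ 0 := by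
    rw [det_fin_two]
    simpa [sub_eq_zero] using hne
  have := rank_submatrix_le M ![i, i'] ![j, j']
  rw [rank_of_det_ne_zero hdet, Fintype.card_fin] at this
  omega

end Matrix

section Exchange

variable {ι M : Type*} [DecidableEq ι] {β : ι → Type*}

theorem piecewise_mul_pow_card_of_exchange [CommMonoid M] {a : (∀ k, β k) → M}
    (hexch : ∀ k u v, a u * a v = a (update u k (v k)) * a (update v k (u k)))
    (i₀ i : ∀ k, β k) (S : Finset ι) :
    a (S.piecewise i i₀) * a i₀ ^ #S = a i₀ * ∏ k ∈ S, a (update i₀ k (i k)) := by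
  induction S using Finset.induction_on with
  | empty => simp
  | insert k S hk ih =>
    have hstep : a (S.piecewise i i₀) * a (update i₀ k (i k)) =
        a ((insert k S).piecewise i i₀) * a i₀ := by
      rw [hexch k, piecewise_insert, update_self, update_idem, piecewise_eq_of_notMem _ _ _ hk,
        update_eq_self]
    rw [card_insert_of_notMem hk, prod_insert hk, pow_succ, ← mul_assoc, mul_right_comm,
      ← hstep, mul_right_comm, ih, mul_assoc, mul_comm (∏ k ∈ S, _)]

theorem eq_mul_prod_div_of_exchange [Fintype ι] [Field M] {a : (∀ k, β k) → M}
    (hexch : ∀ k u v, a u * a v = a (update u k (v k)) * a (update v k (u k)))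
    {i₀ : ∀ k, β k} (hi₀ : a i₀ ≠ 0) (i : ∀ k, β k) :
    a i = a i₀ * ∏ k, a (update i₀ k (i k)) / a i₀ := by
  have := piecewise_mul_pow_card_of_exchange hexch i₀ i univ
  rw [piecewise_univ, card_univ] at this
  rw [prod_div_distrib, prod_const, card_univ, mul_div_assoc', ← this]
  exact (mul_div_cancel_right₀ _ (pow_ne_zero _ hi₀)).symm

end Exchange

section Tensor

variable {n : ℕ} {d : Fin n → ℕ}

@[simp]
theorem insertAt_self (k : Fin n) (I : ∀ s : {s : Fin n // s ≠ k}, Fin (d s)) (j : Fin (d k)) :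
    insertAt k I j k = j := by
  simp [insertAt]

@[simp]
theorem insertAt_of_ne (k : Fin n) (I : ∀ s : {s : Fin n // s ≠ k}, Fin (d s)) (j : Fin (d k))
    (s : {s : Fin n // s ≠ k}) : insertAt k I j s = I s := by
  simp [insertAt, s.2]

theorem insertAt_restrict (k : Fin n) (u : ∀ t, Fin (d t)) (j : Fin (d k)) :
    insertAt k (fun s => u s) j = update u k j := by
  funext t
  by_cases h : t = k
  · subst h
    simp
  · simpa [h] using insertAt_of_ne k (fun s => u s) j ⟨t, h⟩

theorem flatten_apply_restrict (a : (∀ t, Fin (d t)) → ℂ) (k : Fin n) (u : ∀ t, Fin (d t))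
    (j : Fin (d k)) : flatten a k (fun s => u s) j = a (update u k j) := by
  rw [flatten, insertAt_restrict]

theorem Normalized.exists_ne_zero {a : (∀ t, Fin (d t)) → ℂ} (ha : Normalized a) :
    ∃ i, a i ≠ 0 := by
  by_contra! h
  simp [Normalized, h] at ha

theorem flatten_eq_vecMulVec {a : (∀ t, Fin (d t)) → ℂ} {f : ∀ k, Fin (d k) → ℂ}
    (hf : ∀ i, a i = ∏ k, f k (i k)) (k : Fin n) :
    flatten a k = vecMulVec (fun I => ∏ s : {s // s ≠ k}, f s (I s)) (f k) := by
  ext I j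
  simp [flatten, vecMulVec_apply, hf, Fintype.prod_eq_mul_prod_subtype_ne _ k, mul_comm]

theorem Separable.rank_flatten {a : (∀ t, Fin (d t)) → ℂ} (hsep : Separable a)
    {i : ∀ t, Fin (d t)} (hi : a i ≠ 0) (k : Fin n) : (flatten a k).rank = 1 := by
  obtain ⟨f, hf⟩ := hsep
  refine le_antisymm ?_ (one_le_rank_of_apply_ne_zero (i := fun s => i s) (j := i k) ?_)
  · rw [flatten_eq_vecMulVec hf]
    exact rank_vecMulVec_le _ _
  · rwa [flatten_apply_restrict, update_eq_self]

theorem Separable.of_eq_mul_prod {a : (∀ t, Fin (d t)) → ℂ} (k₀ : Fin n) (c : ℂ)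
    (f : ∀ k, Fin (d k) → ℂ) (h : ∀ i, a i = c * ∏ k, f k (i k)) : Separable a :=
  ⟨fun k j => (if k = k₀ then c else 1) * f k j, fun i => by
    rw [h, prod_mul_distrib, prod_ite_eq' univ k₀, if_pos (mem_univ k₀)]⟩

theorem exchange_of_rank_flatten_le_one {a : (∀ t, Fin (d t)) → ℂ} {k : Fin n}
    (hk : (flatten a k).rank ≤ 1) (u v : ∀ t, Fin (d t)) :
    a u * a v = a (update u k (v k)) * a (update v k (u k)) := by
  simpa only [flatten_apply_restrict, update_eq_self] using
    mul_eq_mul_of_rank_le_one hk (fun s => u s) (fun s => v s) (u k) (v k)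

end Tensor

theorem separable_iff_rank_one_general {n : ℕ} (hn : 1 ≤ n) (d : Fin n → ℕ)
    (a : (∀ t : Fin n, Fin (d t)) → ℂ) (ha : Normalized a) :
    Separable a ↔ ∀ k : Fin n, (flatten a k).rank = 1 := by
  obtain ⟨i₀, hi₀⟩ := ha.exists_ne_zero
  refine ⟨fun hsep => hsep.rank_flatten hi₀, fun hrank => ?_⟩
  have hexch := fun k => exchange_of_rank_flatten_le_one (hrank k).le
  exact .of_eq_mul_prod ⟨0, hn⟩ (a i₀) (fun k j => a (update i₀ k j) / a i₀)
    (eq_mul_prod_div_of_exchange hexch hi₀)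

/-- Theorem 3: separability iff every flattening `M_k` has rank 1. -/
theorem separable_iff_rank_one {n : ℕ} (hn : 1 ≤ n) (d : Fin n → ℕ) (hd : ∀ k, 1 ≤ d k)
    (a : (∀ t : Fin n, Fin (d t)) → ℂ) (ha : Normalized a) :
    Separable a ↔ ∀ k : Fin n, (flatten a k).rank = 1 :=
  separable_iff_rank_one_general hn d a ha
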